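/- Let D_i, D_j be domains with joint laws on (X,Y), let L : pred × Y → [0,C] be a bounded loss, and define ε_D(f) = E_D[L(f(X),Y)] for a predictor f. Then ε_{D_j}(f) ≤ ε_{D_i}(f) + √2 · C · d_JS(P_{D_j}^{X,Y}, P_{D_i}^{X,Y}). -/

import Mathlib

/-!
Let `m = (P + Q)/2`, so that `P` and `Q` have densities at most `2` with respect to `m`. For a
test function with values in `[0, C]`, centring it at `C/2` bounds `|E_P g - E_m g|` by
`C/2 · ∫ |dP/dm - 1| dm`, and Pinsker's inequality bounds the square of that integral by
`2 KL(P ‖ m)`. As `E_P g - E_Q g = 2 (E_P g - E_m g) = -2 (E_Q g - E_m g)`, averaging the two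
resulting bounds gives `(E_P g - E_Q g)² ≤ 2 C² JS(P, Q)`.
-/

open MeasureTheory ProbabilityTheory Real
open scoped ENNReal

/-- Kullback–Leibler divergence (natural log), as a real number. -/
noncomputable def klDiv {α : Type*} [MeasurableSpace α] (P Q : Measure α) : ℝ :=
  ∫ x, Real.log ((P.rnDeriv Q) x).toReal ∂P

/-- The midpoint (mixture) measure (P + Q)/2. -/
noncomputable def midM {α : Type*} [MeasurableSpace α] (P Q : Measure α) : Measure α :=
  (2⁻¹ : ℝ≥0∞) • (P + Q)

/-- Jensen–Shannon divergence. -/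
noncomputable def jsDiv {α : Type*} [MeasurableSpace α] (P Q : Measure α) : ℝ :=
  2⁻¹ * klDiv P (midM P Q) + 2⁻¹ * klDiv Q (midM P Q)

/-- Jensen–Shannon distance. -/
noncomputable def jsDist {α : Type*} [MeasurableSpace α] (P Q : Measure α) : ℝ :=
  Real.sqrt (jsDiv P Q)

open Set
open InformationTheory (klFun klFun_apply klFun_one klFun_nonneg measurable_klFun hasDerivAt_klFun
  integral_klFun_rnDeriv integrable_klFun_rnDeriv_iff)

lemma monotoneOn_add_one_mul_log_sub :
    MonotoneOn (fun x : ℝ => (x + 1) * log x - 2 * (x - 1)) (Ioi 0) := by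
  refine monotoneOn_of_hasDerivWithinAt_nonneg (convex_Ioi 0)
    (f' := fun x => log x + (x + 1) * x⁻¹ - 2) ?_ (fun x hx => ?_) (fun x hx => ?_)
  · exact ContinuousOn.sub (ContinuousOn.mul (by fun_prop) (continuousOn_log.mono
      fun x hx => ne_of_gt hx)) (by fun_prop)
  · rw [interior_Ioi] at hx
    have := (((hasDerivAt_id x).add_const 1).mul (hasDerivAt_log (ne_of_gt hx))).sub
      (((hasDerivAt_id x).sub_const 1).const_mul 2)
    exact (this.congr_deriv (by simp)).hasDerivWithinAt
  · rw [interior_Ioi] at hx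
    have hlog := log_le_sub_one_of_pos (inv_pos.2 hx)
    rw [log_inv] at hlog
    have : (x + 1) * x⁻¹ = 1 + x⁻¹ := by
      rw [add_mul, mul_inv_cancel₀ (ne_of_gt hx), one_mul]
    linarith

lemma hasDerivAt_pinsker_gap {x : ℝ} (hx : 0 < x) :
    HasDerivAt (fun y => 2 * (y + 2) * klFun y - 3 * (y - 1) ^ 2)
      (4 * ((x + 1) * log x - 2 * (x - 1))) x := by
  have := ((((hasDerivAt_id x).add_const 2).const_mul 2).mul (hasDerivAt_klFun hx.ne')).sub
    ((((hasDerivAt_id x).sub_const 1).pow 2).const_mul 3)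
  exact this.congr_deriv (by simp only [klFun, id]; ring)

/-- The gap vanishes at `1`, and its derivative (`hasDerivAt_pinsker_gap`) has the sign of `x - 1`
since `(x + 1) log x - 2 (x - 1)` is monotone and vanishes at `1`. -/
lemma sq_sub_one_le_klFun {x : ℝ} (hx : 0 ≤ x) : 3 * (x - 1) ^ 2 ≤ 2 * (x + 2) * klFun x := by
  set h : ℝ → ℝ := fun y => 2 * (y + 2) * klFun y - 3 * (y - 1) ^ 2
  set h' : ℝ → ℝ := fun y => 4 * ((y + 1) * log y - 2 * (y - 1))
  have hcont : Continuous h := by fun_prop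
  have hG := monotoneOn_add_one_mul_log_sub
  suffices h 1 ≤ h x by simpa [h, klFun_one] using this
  rcases le_total 1 x with h1 | h1
  · refine monotoneOn_of_hasDerivWithinAt_nonneg (f' := h') (convex_Ici 1) hcont.continuousOn
      (fun y hy => ?_) (fun y hy => ?_) self_mem_Ici h1 h1
    · rw [interior_Ici] at hy
      exact (hasDerivAt_pinsker_gap (one_pos.trans hy)).hasDerivWithinAt
    · rw [interior_Ici] at hy
      have := hG (mem_Ioi.2 one_pos) (mem_Ioi.2 (one_pos.trans hy)) hy.le
      simp only [h', log_one] at this ⊢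
      linarith
  · refine antitoneOn_of_hasDerivWithinAt_nonpos (f' := h') (convex_Icc 0 1) hcont.continuousOn
      (fun y hy => ?_) (fun y hy => ?_) ⟨hx, h1⟩ (right_mem_Icc.2 zero_le_one) h1
    · rw [interior_Icc] at hy
      exact (hasDerivAt_pinsker_gap hy.1).hasDerivWithinAt
    · rw [interior_Icc] at hy
      have := hG (mem_Ioi.2 hy.1) (mem_Ioi.2 one_pos) hy.2.le
      simp only [h', log_one] at this ⊢
      linarith

/-- AM-GM against the weight `(x + 2)/6`; optimising `s` after integration replaces the
Cauchy-Schwarz step of the usual proof of Pinsker's inequality. -/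
lemma mul_abs_sub_one_le_klFun {x : ℝ} (hx : 0 ≤ x) (s : ℝ) :
    s * |x - 1| ≤ s ^ 2 * (x + 2) / 6 + klFun x := by
  have key := sq_sub_one_le_klFun hx
  rw [← sq_abs] at key
  have hpos : 0 < 6 * (x + 2) := by positivity
  refine le_of_mul_le_mul_left ?_ hpos
  nlinarith [sq_nonneg (s * (x + 2) - 3 * |x - 1|)]

lemma klFun_le_sq_sub_one {x : ℝ} (hx : 0 ≤ x) : klFun x ≤ (x - 1) ^ 2 := by
  have : x * log x ≤ x * (x - 1) := by
    rcases hx.eq_or_lt with rfl | hx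
    · simp
    · exact mul_le_mul_of_nonneg_left (log_le_sub_one_of_pos hx) hx.le
  simp only [klFun_apply]
  nlinarith

lemma Measurable.integrable_of_nonneg_of_le {α : Type*} [MeasurableSpace α] {μ : Measure α}
    [IsFiniteMeasure μ] {g : α → ℝ} {C : ℝ} (hg : Measurable g) (hg0 : ∀ x, 0 ≤ g x)
    (hgC : ∀ x, g x ≤ C) : Integrable g μ :=
  .of_bound hg.aestronglyMeasurable C
    (.of_forall fun x => (Real.norm_of_nonneg (hg0 x)).trans_le (hgC x))

section Pinsker

variable {α : Type*} [MeasurableSpace α] {P M : Measure α}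

lemma klDiv_eq_integral_klFun_rnDeriv [IsProbabilityMeasure P] [IsProbabilityMeasure M]
    (hPM : P ≪ M) (h_int : Integrable (llr P M) P) :
    klDiv P M = ∫ x, klFun (P.rnDeriv M x).toReal ∂M := by
  simp [integral_klFun_rnDeriv hPM h_int, klDiv, llr]

lemma sq_integral_abs_rnDeriv_sub_one_le [IsProbabilityMeasure P] [IsProbabilityMeasure M]
    (hPM : P ≪ M) (h_int : Integrable (llr P M) P) :
    (∫ x, |(P.rnDeriv M x).toReal - 1| ∂M) ^ 2 ≤ 2 * klDiv P M := by
  set ρ : α → ℝ := fun x => (P.rnDeriv M x).toReal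
  set X := ∫ x, |ρ x - 1| ∂M
  have hρ : Integrable ρ M := Measure.integrable_toReal_rnDeriv
  have hρ1 : ∫ x, ρ x ∂M = 1 := by simp [ρ, Measure.integral_toReal_rnDeriv hPM]
  have hK : Integrable (fun x => klFun (ρ x)) M := (integrable_klFun_rnDeriv_iff hPM).2 h_int
  have hpt : ∀ x, X * |ρ x - 1| ≤ X ^ 2 / 6 * ρ x + (X ^ 2 / 3 + klFun (ρ x)) := fun x => by
    have := mul_abs_sub_one_le_klFun (ENNReal.toReal_nonneg (a := P.rnDeriv M x)) X
    linarith
  have hint_lhs : Integrable (fun x => X * |ρ x - 1|) M :=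
    (hρ.sub (integrable_const 1)).abs.const_mul X
  have hint_ρ : Integrable (fun x => X ^ 2 / 6 * ρ x) M := hρ.const_mul _
  have hint_K : Integrable (fun x => X ^ 2 / 3 + klFun (ρ x)) M := (integrable_const _).add hK
  have hlhs : ∫ x, X * |ρ x - 1| ∂M = X ^ 2 := by rw [integral_const_mul, sq]
  have hrhs :
      ∫ x, (X ^ 2 / 6 * ρ x + (X ^ 2 / 3 + klFun (ρ x))) ∂M = X ^ 2 / 2 + klDiv P M := by
    rw [integral_add hint_ρ hint_K, integral_add (integrable_const _) hK, integral_const_mul, hρ1,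
      integral_const, klDiv_eq_integral_klFun_rnDeriv hPM h_int]
    simp only [probReal_univ, one_smul]
    ring
  have := calc X ^ 2 = ∫ x, X * |ρ x - 1| ∂M := hlhs.symm
    _ ≤ ∫ x, (X ^ 2 / 6 * ρ x + (X ^ 2 / 3 + klFun (ρ x))) ∂M :=
      integral_mono hint_lhs (hint_ρ.add hint_K) hpt
    _ = X ^ 2 / 2 + klDiv P M := hrhs
  linarith

lemma abs_integral_sub_integral_le_of_abs_le [IsFiniteMeasure P] [IsFiniteMeasure M]
    (hPM : P ≪ M) {h : α → ℝ} {c : ℝ} (hh : AEStronglyMeasurable h M)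
    (hc : ∀ x, |h x| ≤ c) :
    |∫ x, h x ∂P - ∫ x, h x ∂M| ≤ c * ∫ x, |(P.rnDeriv M x).toReal - 1| ∂M := by
  set ρ : α → ℝ := fun x => (P.rnDeriv M x).toReal
  have hρ : Integrable ρ M := Measure.integrable_toReal_rnDeriv
  have hdiff : ∫ x, h x ∂P - ∫ x, h x ∂M = ∫ x, (ρ x - 1) * h x ∂M := by
    have hρh : Integrable (fun x => ρ x * h x) M := hρ.mul_bdd hh (.of_forall hc)
    have hh' : Integrable h M := .of_bound hh c (.of_forall hc)
    simp_rw [sub_one_mul]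
    rw [integral_sub hρh hh', ← integral_rnDeriv_smul hPM (f := h)]
    rfl
  rw [hdiff, ← integral_const_mul, ← Real.norm_eq_abs]
  refine norm_integral_le_of_norm_le ((hρ.sub (integrable_const 1)).abs.const_mul c)
    (.of_forall fun x => ?_)
  rw [norm_mul, Real.norm_eq_abs, mul_comm c]
  exact mul_le_mul_of_nonneg_left (hc x) (abs_nonneg _)

lemma sq_integral_sub_integral_le_klDiv [IsProbabilityMeasure P] [IsProbabilityMeasure M]
    (hPM : P ≪ M) (h_int : Integrable (llr P M) P) {g : α → ℝ} {C : ℝ} (hg : Measurable g)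
    (hg0 : ∀ x, 0 ≤ g x) (hgC : ∀ x, g x ≤ C) :
    (∫ x, g x ∂P - ∫ x, g x ∂M) ^ 2 ≤ C ^ 2 / 2 * klDiv P M := by
  have hshift :
      ∫ x, g x ∂P - ∫ x, g x ∂M = ∫ x, (g x - C / 2) ∂P - ∫ x, (g x - C / 2) ∂M := by
    rw [integral_sub (hg.integrable_of_nonneg_of_le hg0 hgC) (integrable_const _),
      integral_sub (hg.integrable_of_nonneg_of_le hg0 hgC) (integrable_const _)]
    simp
  have hTV := abs_integral_sub_integral_le_of_abs_le hPM (c := C / 2)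
    (hg.sub_const (C / 2)).aestronglyMeasurable
    fun x => abs_sub_le_iff.2 ⟨by linarith [hgC x], by linarith [hg0 x]⟩
  have hPinsker := sq_integral_abs_rnDeriv_sub_one_le hPM h_int
  rw [hshift, ← sq_abs]
  calc _ ≤ (C / 2 * ∫ x, |(P.rnDeriv M x).toReal - 1| ∂M) ^ 2 :=
        pow_le_pow_left₀ (abs_nonneg _) hTV 2
    _ = C ^ 2 / 4 * (∫ x, |(P.rnDeriv M x).toReal - 1| ∂M) ^ 2 := by ring
    _ ≤ C ^ 2 / 4 * (2 * klDiv P M) := by gcongr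
    _ = C ^ 2 / 2 * klDiv P M := by ring

end Pinsker

section Midpoint

variable {α : Type*} [MeasurableSpace α] {P Q : Measure α}

instance [IsFiniteMeasure P] [IsFiniteMeasure Q] : IsFiniteMeasure (midM P Q) :=
  ⟨by
    rw [midM, Measure.smul_apply, smul_eq_mul]
    exact ENNReal.mul_lt_top (by simp) (measure_lt_top _ _)⟩

instance [IsProbabilityMeasure P] [IsProbabilityMeasure Q] : IsProbabilityMeasure (midM P Q) :=
  ⟨by simp [midM, ENNReal.inv_two_add_inv_two]⟩

lemma midM_comm (P Q : Measure α) : midM P Q = midM Q P := by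
  rw [midM, midM, add_comm]

lemma absolutelyContinuous_midM_left (P Q : Measure α) : P ≪ midM P Q :=
  (Measure.AbsolutelyContinuous.rfl.add_right Q).smul_right (by norm_num)

lemma rnDeriv_midM_le_two [IsFiniteMeasure P] [IsFiniteMeasure Q] :
    ∀ᵐ x ∂midM P Q, P.rnDeriv (midM P Q) x ≤ 2 := by
  have hle : (2⁻¹ : ℝ≥0∞) • P ≤ midM P Q := Measure.le_iff'.2 fun s => by
    simp only [midM, Measure.smul_apply, Measure.coe_add, Pi.add_apply, smul_eq_mul]
    gcongr
    exact le_self_add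
  filter_upwards [Measure.rnDeriv_le_one_of_le hle,
    Measure.rnDeriv_smul_left_of_ne_top' P (midM P Q) (by simp : (2⁻¹ : ℝ≥0∞) ≠ ∞)]
    with x hx1 hx2
  rwa [hx2, Pi.smul_apply, smul_eq_mul, Pi.one_apply,
    ENNReal.inv_mul_le_iff two_ne_zero ENNReal.ofNat_ne_top, mul_one] at hx1

lemma integrable_llr_midM [IsProbabilityMeasure P] [IsProbabilityMeasure Q] :
    Integrable (llr P (midM P Q)) P := by
  refine (integrable_klFun_rnDeriv_iff (absolutelyContinuous_midM_left P Q)).1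
    (.of_bound (measurable_klFun.comp
      (Measure.measurable_rnDeriv _ _).ennreal_toReal).aestronglyMeasurable 1 ?_)
  filter_upwards [rnDeriv_midM_le_two (P := P) (Q := Q)] with x hx
  have h0 : 0 ≤ (P.rnDeriv (midM P Q) x).toReal := ENNReal.toReal_nonneg
  have h2 : (P.rnDeriv (midM P Q) x).toReal ≤ 2 :=
    ENNReal.toReal_le_of_le_ofReal zero_le_two (by simpa using hx)
  rw [Real.norm_of_nonneg (klFun_nonneg h0)]
  nlinarith [klFun_le_sq_sub_one h0]

lemma integral_midM {g : α → ℝ} (hP : Integrable g P) (hQ : Integrable g Q) :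
    ∫ x, g x ∂midM P Q = 2⁻¹ * (∫ x, g x ∂P + ∫ x, g x ∂Q) := by
  rw [midM, integral_smul_measure, integral_add_measure hP hQ]
  simp

end Midpoint

section JensenShannon

variable {α : Type*} [MeasurableSpace α] {P Q : Measure α}
  [IsProbabilityMeasure P] [IsProbabilityMeasure Q] {g : α → ℝ} {C : ℝ}

lemma sq_integral_sub_integral_le_jsDiv (hg : Measurable g) (hg0 : ∀ x, 0 ≤ g x)
    (hgC : ∀ x, g x ≤ C) :
    (∫ x, g x ∂P - ∫ x, g x ∂Q) ^ 2 ≤ 2 * C ^ 2 * jsDiv P Q := by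
  have hP := sq_integral_sub_integral_le_klDiv (absolutelyContinuous_midM_left P Q)
    integrable_llr_midM hg hg0 hgC
  have hQ := sq_integral_sub_integral_le_klDiv (P := Q) (M := midM P Q)
    (midM_comm Q P ▸ absolutelyContinuous_midM_left Q P) (midM_comm Q P ▸ integrable_llr_midM)
    hg hg0 hgC
  rw [integral_midM (hg.integrable_of_nonneg_of_le hg0 hgC)
    (hg.integrable_of_nonneg_of_le hg0 hgC)] at hP hQ
  rw [jsDiv]
  nlinarith

lemma abs_integral_sub_integral_le_jsDist (hC : 0 ≤ C) (hg : Measurable g)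
    (hg0 : ∀ x, 0 ≤ g x) (hgC : ∀ x, g x ≤ C) :
    |∫ x, g x ∂P - ∫ x, g x ∂Q| ≤ √2 * C * jsDist P Q := by
  have : √2 * C * jsDist P Q = √(2 * C ^ 2 * jsDiv P Q) := by
    rw [jsDist, sqrt_mul (by positivity), sqrt_mul zero_le_two, sqrt_sq hC]
  rw [this]
  exact abs_le_sqrt (sq_integral_sub_integral_le_jsDiv hg hg0 hgC)

end JensenShannon

/-- single-domain accuracy transfer:
ε_{D_j}(f) ≤ ε_{D_i}(f) + √2·C·d_JS(P_{D_j}^{X,Y}, P_{D_i}^{X,Y}). -/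
theorem stmt9 {𝒳 𝒴 Pred : Type*} [MeasurableSpace 𝒳] [MeasurableSpace 𝒴]
    [MeasurableSpace Pred]
    (μi μj : Measure (𝒳 × 𝒴)) [IsProbabilityMeasure μi] [IsProbabilityMeasure μj]
    (L : Pred → 𝒴 → ℝ) (C : ℝ) (hC : 0 < C)
    (hL : Measurable (Function.uncurry L))
    (hL0 : ∀ p y, 0 ≤ L p y) (hLC : ∀ p y, L p y ≤ C)
    (f : 𝒳 → Pred) (hf : Measurable f) :
    ∫ p, L (f p.1) p.2 ∂μj
      ≤ ∫ p, L (f p.1) p.2 ∂μi + Real.sqrt 2 * C * jsDist μj μi := by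
  have hg : Measurable fun p : 𝒳 × 𝒴 => L (f p.1) p.2 :=
    hL.comp ((hf.comp measurable_fst).prodMk measurable_snd)
  have h := abs_integral_sub_integral_le_jsDist hC.le hg (fun p => hL0 _ _) (fun p => hLC _ _)
    (P := μj) (Q := μi)
  linarith [(abs_le.1 h).2]
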